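/- Let Δ̂ : [0,∞) → ℝⁿ satisfy Δ̂'(t) = Λ(Δ(t) − Δ̂(t)) with Δ̂(0) = 0, where Λ is symmetric positive definite and ‖Δ(t)‖ ≤ δ_b for all t ≥ 0. Let P solve PΛ + ΛᵀP = −I and 𝒫 = √(‖P⁻¹‖‖P‖). Then for all t ≥ 0, ‖Δ̂(t)‖ ≤ 2𝒫 δ_b ‖Λ‖ ‖P‖ (1 − exp(−t/(2‖P‖))). -/

import Mathlib

open Matrix
open scoped Matrix.Norms.L2Operator

/-!
Since `Λ` is positive semidefinite and the Lyapunov equation makes `P` commute with `Λ²`, `P`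
commutes with `Λ = √(Λ²)`; hence `P = -Λ⁻¹/2`, so `2‖P‖ = ‖Λ⁻¹‖` and `‖P⁻¹‖ = 2‖Λ‖`.
Writing `Λ = C²` with `C = √Λ` gives the coercivity `⟪x, Λx⟫ = ‖Cx‖² ≥ ‖Λ⁻¹‖⁻¹‖x‖²`, so the
right Dini derivative of `‖Δ̂‖` is at most `‖Λ‖δ_b - ‖Λ⁻¹‖⁻¹‖Δ̂‖`, and Grönwall's inequality gives
`‖Δ̂(t)‖ ≤ ‖Λ‖‖Λ⁻¹‖δ_b (1 - e^{-t/‖Λ⁻¹‖})`. The claimed bound is this one multiplied by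
`√(‖Λ‖‖Λ⁻¹‖) ≥ 1`.
-/

open Set Filter Topology
open scoped RealInnerProductSpace

section CommuteSqrt

variable {A : Type*} [PartialOrder A] [Ring A] [StarRing A] [TopologicalSpace A] [Algebra ℝ A]
  [StarOrderedRing A] [NonnegSpectrumClass ℝ A] [ContinuousFunctionalCalculus ℝ A IsSelfAdjoint]
  [IsTopologicalRing A] [T2Space A]

theorem commute_of_commute_mul_self {a b : A} (ha : 0 ≤ a) (h : Commute (a * a) b) :
    Commute a b :=
  CFC.sqrt_mul_self a ha ▸ h.cfcₙ_nnreal _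

theorem commute_of_mul_add_mul_eq {a b c : A} (ha : 0 ≤ a) (hc : Commute a c)
    (h : b * a + a * b = c) : Commute a b := by
  refine commute_of_commute_mul_self ha (sub_eq_zero.mp ?_)
  calc a * a * b - b * (a * a) = a * (b * a + a * b) - (b * a + a * b) * a := by noncomm_ring
    _ = 0 := by rw [h, hc.eq, sub_self]

end CommuteSqrt

theorem Matrix.PosSemidef.inv_eq_of_mul_add_mul_eq_neg_one {n : Type*} [Fintype n]
    [DecidableEq n] {L P : Matrix n n ℝ} (hL : L.PosSemidef) (h : P * L + L * P = -1) :
    L⁻¹ = (-2 : ℝ) • P ∧ P⁻¹ = (-2 : ℝ) • L := by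
  have hLP : Commute L P := open MatrixOrder in
    commute_of_mul_add_mul_eq hL.nonneg (Commute.one_right L).neg_right h
  rw [← hLP.eq] at h
  constructor <;> refine inv_eq_right_inv ?_
  · rw [mul_smul_comm, neg_smul, two_smul, h, neg_neg]
  · rw [mul_smul_comm, ← hLP.eq, neg_smul, two_smul, h, neg_neg]

namespace Matrix.PosDef

variable {n : Type*} [Fintype n] [DecidableEq n] {L : Matrix n n ℝ}

theorem inv_norm_inv_mul_norm_sq_le_inner (hL : L.PosDef) (x : EuclideanSpace ℝ n) :
    ‖L⁻¹‖⁻¹ * ‖x‖ ^ 2 ≤ ⟪x, toEuclideanCLM (𝕜 := ℝ) L x⟫ := by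
  open MatrixOrder in
  obtain ⟨C, hC, rfl⟩ : ∃ C : Matrix n n ℝ, star C = C ∧ L = C * C :=
    ⟨CFC.sqrt L, (CFC.sqrt_nonneg L).posSemidef.1,
      (CFC.sqrt_mul_sqrt_self L hL.posSemidef.nonneg).symm⟩
  have hCdet : IsUnit C.det := (isUnit_iff_isUnit_det C).mp (isUnit_of_mul_isUnit_left hL.isUnit)
  set T := toEuclideanCLM (𝕜 := ℝ) (n := n)
  have hx : ‖x‖ ≤ ‖C⁻¹‖ * ‖T C x‖ := by
    have := (T C⁻¹).le_opNorm (T C x)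
    rwa [← mul_apply_eq_comp, ← map_mul, nonsing_inv_mul _ hCdet, map_one,
      one_apply_eq_self] at this
  have hinv : ‖(C * C)⁻¹‖ = ‖C⁻¹‖ ^ 2 := by
    rw [mul_inv_rev, sq, ← l2_opNorm_conjTranspose_mul_self, conjTranspose_nonsing_inv,
      ← star_eq_conjTranspose, hC]
  have hCx : ‖T C x‖ ^ 2 = ⟪x, T (C * C) x⟫ := by
    rw [← real_inner_self_eq_norm_sq, map_mul, mul_apply_eq_comp]
    nth_rw 2 [← hC]
    rw [map_star, ContinuousLinearMap.star_eq_adjoint, ContinuousLinearMap.adjoint_inner_right,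
      real_inner_comm]
  rw [hinv, ← hCx, ← inv_pow, ← mul_pow]
  exact pow_le_pow_left₀ (by positivity)
    (inv_mul_le_of_le_mul₀ (by positivity) (by positivity) hx) 2

end Matrix.PosDef

section Dissipative

variable {E : Type*} [NormedAddCommGroup E] [InnerProductSpace ℝ E]

theorem HasDerivWithinAt.frequently_slope_norm_lt {v : ℝ → E} {v' : E} {x B r : ℝ}
    (hv : HasDerivWithinAt v v' (Ici x) x) (hne : v x ≠ 0 → ⟪v x, v'⟫ ≤ B * ‖v x‖)
    (h0 : v x = 0 → ‖v'‖ ≤ B) (hr : B < r) :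
    ∃ᶠ z in 𝓝[>] x, (z - x)⁻¹ * (‖v z‖ - ‖v x‖) < r := by
  -- `‖v‖` is differentiable only where `v ≠ 0`; at a zero its right slopes tend to `‖v'‖`.
  rcases eq_or_ne (v x) 0 with hx | hx
  · exact hv.liminf_right_slope_norm_le ((h0 hx).trans_lt hr)
  have hpos : 0 < ‖v x‖ := norm_pos_iff.mpr hx
  have hnorm : HasDerivWithinAt (‖v ·‖) (⟪v x, v'⟫ / ‖v x‖) (Ici x) x := by
    have := hv.norm_sq.sqrt (by positivity)
    simp only [Real.sqrt_sq (norm_nonneg _)] at this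
    convert this using 1
    field_simp
  exact hnorm.liminf_right_slope_le (((div_le_iff₀ hpos).mpr (hne hx)).trans_lt hr)

theorem norm_le_gronwallBound_of_coercive {v f : ℝ → E} {A : E →L[ℝ] E}
    {c b a T : ℝ} (hA : ∀ y, c * ‖y‖ ^ 2 ≤ ⟪y, A y⟫) (hcont : ContinuousOn v (Icc a T))
    (hv : ∀ t ∈ Ico a T, HasDerivWithinAt v (f t - A (v t)) (Ici t) t)
    (hf : ∀ t ∈ Ico a T, ‖f t‖ ≤ b) :
    ∀ t ∈ Icc a T, ‖v t‖ ≤ gronwallBound ‖v a‖ (-c) b (t - a) := by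
  refine le_gronwallBound_of_liminf_deriv_right_le (f' := fun t => b - c * ‖v t‖)
    (continuous_norm.comp_continuousOn hcont)
    (fun t ht r hr => (hv t ht).frequently_slope_norm_lt ?_ ?_ hr) le_rfl
    (fun t _ => by linarith)
  · intro _
    calc ⟪v t, f t - A (v t)⟫ = ⟪v t, f t⟫ - ⟪v t, A (v t)⟫ := inner_sub_right _ _ _
      _ ≤ ‖v t‖ * ‖f t‖ - c * ‖v t‖ ^ 2 := sub_le_sub (real_inner_le_norm _ _) (hA _)
      _ ≤ (b - c * ‖v t‖) * ‖v t‖ := by nlinarith [hf t ht, norm_nonneg (v t)]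
  · intro h0
    simpa [h0] using hf t ht

end Dissipative

theorem gronwallBound_zero_neg {c : ℝ} (hc : c ≠ 0) (b t : ℝ) :
    gronwallBound 0 (-c) b t = b / c * (1 - Real.exp (-(c * t))) := by
  rw [gronwallBound_of_K_ne_0 (neg_ne_zero.2 hc)]
  ring_nf

theorem EuclideanSpace.norm_toLp_eq_sqrt_dotProduct {n : Type*} [Fintype n] (x : n → ℝ) :
    ‖WithLp.toLp 2 x‖ = √(x ⬝ᵥ x) := by
  rw [norm_eq_sqrt_real_inner, EuclideanSpace.inner_toLp_toLp, star_trivial]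

theorem Matrix.PosDef.sqrt_dotProduct_le_gronwallBound {ι : Type*} [Fintype ι] [DecidableEq ι]
    {L : Matrix ι ι ℝ} (hL : L.PosDef) {x u : ℝ → ι → ℝ} {b t : ℝ}
    (hx : ∀ s, 0 ≤ s → HasDerivAt x (L *ᵥ (u s - x s)) s) (hu : ∀ s, 0 ≤ s → √(u s ⬝ᵥ u s) ≤ b)
    (ht : 0 ≤ t) :
    √(x t ⬝ᵥ x t) ≤ gronwallBound √(x 0 ⬝ᵥ x 0) (-‖L⁻¹‖⁻¹) (‖L‖ * b) t := by
  simp only [← EuclideanSpace.norm_toLp_eq_sqrt_dotProduct]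
  have hderiv (s : ℝ) (hs : 0 ≤ s) :
      HasDerivAt (WithLp.toLp 2 ∘ x) (WithLp.toLp 2 (L *ᵥ (u s - x s))) s :=
    (PiLp.hasFDerivAt_toLp 2 _).comp_hasDerivAt s (hx s hs)
  have hforce (s : ℝ) (hs : 0 ≤ s) : ‖WithLp.toLp 2 (L *ᵥ u s)‖ ≤ ‖L‖ * b := calc
    ‖WithLp.toLp 2 (L *ᵥ u s)‖ = ‖toEuclideanCLM (𝕜 := ℝ) L (WithLp.toLp 2 (u s))‖ := rfl
    _ ≤ ‖L‖ * ‖WithLp.toLp 2 (u s)‖ := (toEuclideanCLM (𝕜 := ℝ) L).le_opNorm _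
    _ ≤ ‖L‖ * b := by
      rw [EuclideanSpace.norm_toLp_eq_sqrt_dotProduct]; gcongr; exact hu s hs
  simpa using norm_le_gronwallBound_of_coercive (v := WithLp.toLp 2 ∘ x)
    (f := fun s => WithLp.toLp 2 (L *ᵥ u s)) hL.inv_norm_inv_mul_norm_sq_le_inner
    (fun s hs => (hderiv s hs.1).continuousAt.continuousWithinAt)
    (fun s hs => by simpa [mulVec_sub] using (hderiv s hs.1).hasDerivWithinAt)
    (fun s hs => hforce s hs.1) t ⟨ht, le_rfl⟩

/-- Lemma 3, second bound: if `Δ̂'(t) = Λ(Δ(t) − Δ̂(t))`, `Δ̂(0) = 0`, `Λ` symmetric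
positive definite, `‖Δ(t)‖ ≤ δ_b`, and `P` solves `PΛ + ΛᵀP = −I`, then with
`𝒫 = √(‖P⁻¹‖‖P‖)` one has `‖Δ̂(t)‖ ≤ 2𝒫 δ_b ‖Λ‖ ‖P‖ (1 − e^{−t/(2‖P‖)})`. -/
theorem estimator_output_bound (n : ℕ) (L P : Matrix (Fin n) (Fin n) ℝ)
    (hsymm : L.IsSymm) (hpd : L.PosDef)
    (Dhat D : ℝ → (Fin n → ℝ)) (db : ℝ)
    (hode : ∀ t, 0 ≤ t → HasDerivAt Dhat (L *ᵥ (D t - Dhat t)) t)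
    (h0 : Dhat 0 = 0)
    (hD : ∀ t, 0 ≤ t → Real.sqrt (D t ⬝ᵥ D t) ≤ db)
    (hLyap : P * L + Lᵀ * P = -1) :
    ∀ t, 0 ≤ t →
      Real.sqrt (Dhat t ⬝ᵥ Dhat t) ≤
        2 * Real.sqrt (‖P⁻¹‖ * ‖P‖) * db * ‖L‖ * ‖P‖ *
          (1 - Real.exp (-(t / (2 * ‖P‖)))) := by
  intro t ht
  rcases isEmpty_or_nonempty (Fin n) with hn | hn
  · simp [Subsingleton.elim L 0, Subsingleton.elim (Dhat t) 0]
  obtain ⟨hLinv, hPinv⟩ := hpd.posSemidef.inv_eq_of_mul_add_mul_eq_neg_one (hsymm.eq ▸ hLyap)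
  have hnormLinv : ‖L⁻¹‖ = 2 * ‖P‖ := by rw [hLinv, norm_smul]; norm_num
  have hnormPinv : ‖P⁻¹‖ = 2 * ‖L‖ := by rw [hPinv, norm_smul]; norm_num
  have hcond : 1 ≤ ‖L‖ * ‖L⁻¹‖ := (one_le_norm_one _).trans <| by
    rw [← mul_nonsing_inv L (isUnit_iff_ne_zero.mpr hpd.det_pos.ne')]; exact norm_mul_le _ _
  have hP : 0 < ‖P‖ := by nlinarith [norm_nonneg L, norm_nonneg P]
  have hbound := hpd.sqrt_dotProduct_le_gronwallBound hode hD ht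
  rw [h0, dotProduct_zero, Real.sqrt_zero, hnormLinv, gronwallBound_zero_neg (by positivity),
    div_inv_eq_mul, ← div_eq_inv_mul] at hbound
  have hdecay : 0 ≤ 1 - Real.exp (-(t / (2 * ‖P‖))) :=
    sub_nonneg.2 (Real.exp_le_one_iff.2 (neg_nonpos.2 (by positivity)))
  have hdb : 0 ≤ db := (Real.sqrt_nonneg _).trans (hD 0 le_rfl)
  have hs : 1 ≤ √(‖P⁻¹‖ * ‖P‖) := by
    rw [hnormPinv, Real.one_le_sqrt]; nlinarith
  calc √(Dhat t ⬝ᵥ Dhat t) ≤ ‖L‖ * db * (2 * ‖P‖) * (1 - Real.exp (-(t / (2 * ‖P‖)))) := hbound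
    _ ≤ √(‖P⁻¹‖ * ‖P‖) * (‖L‖ * db * (2 * ‖P‖) * (1 - Real.exp (-(t / (2 * ‖P‖))))) :=
      le_mul_of_one_le_left (by positivity) hs
    _ = _ := by ring
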